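/- Let w_1,...,w_n span ℚ^d and suppose that the Gale dual point configuration in ℚ^(n-d-1) has a point a_j lying in the convex hull of the other points. Then there exists an index j and a linear functional f on ℚ^d with f(w_i) ≥ 0 for all i ≠ j and f not identically zero on {w_i : i ≠ j}; in particular the configuration is not positively 2-spanning. -/

import Mathlib

/-- A vector configuration is *positively 2-spanning* if for every linear hyperplane
(kernel of a nonzero linear functional), each of the two open halfspaces contains at
least 2 vectors of the configuration (counted with multiplicity, i.e. indices). -/
def Pos2Span {ι V : Type*} [AddCommGroup V] [Module ℚ V] (w : ι → V) : Prop :=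
  ∀ f : V →ₗ[ℚ] ℚ, f ≠ 0 →
    (∃ i j : ι, i ≠ j ∧ 0 < f (w i) ∧ 0 < f (w j)) ∧
    (∃ i j : ι, i ≠ j ∧ f (w i) < 0 ∧ f (w j) < 0)

/-- `g` is a Gale transform of the point configuration `a`: the rows of the matrix `B`
(whose columns are the `g i`) are linearly independent, there are `n - d - 1` of them,
and they are orthogonal to the rows of the matrix `Ã` whose columns are `(a i, 1)`. -/
def IsGale {n d m : ℕ} (a : Fin n → Fin d → ℚ) (g : Fin n → Fin m → ℚ) : Prop :=
  m + (d + 1) = n ∧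
  LinearIndependent ℚ (fun k : Fin m => fun i : Fin n => g i k) ∧
  (∀ k : Fin m, ∑ i, g i k = 0) ∧
  (∀ k : Fin m, ∀ j : Fin d, ∑ i, a i j * g i k = 0)

/-!
Write `c := μ - e_j`, where `μ` are convex weights expressing `a j` through the other points.
Then `c` is an affine dependence of the points `a i`. The affine functionals, evaluated at the
points, span exactly the linear dependences of the `w i`: their values are dependences by
the Gale orthogonality relations, and the dimensions agree because `w` spans and `a` affinely
spans. Hence `c` annihilates every linear dependence of the `w i`, so `c i = f (w i)` for a
linear functional `f`. This `f` is nonnegative on the `w i` with `i ≠ j`, nonzero on one of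
them, and equals `-1` at `w j`, so the open halfspace `f < 0` contains only `w j`.
-/

open Module

theorem LinearMap.exists_comp_eq_of_ker_le {R M M₂ M₃ : Type*} [Ring R] [AddCommGroup M]
    [AddCommGroup M₂] [AddCommGroup M₃] [Module R M] [Module R M₂] [Module R M₃]
    {T : M →ₗ[R] M₂} (hT : Function.Surjective T) {ψ : M →ₗ[R] M₃} (h : ker T ≤ ker ψ) :
    ∃ f : M₂ →ₗ[R] M₃, f ∘ₗ T = ψ :=
  ⟨(ker T).liftQ ψ h ∘ₗ (T.quotKerEquivOfSurjective hT).symm.toLinearMap, by ext x; simp⟩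

theorem LinearMap.range_eq_ker_of_finrank_add_eq {K U V W : Type*} [DivisionRing K]
    [AddCommGroup U] [AddCommGroup V] [AddCommGroup W] [Module K U] [Module K V] [Module K W]
    [FiniteDimensional K V] {E : U →ₗ[K] V} {T : V →ₗ[K] W} (hE : Function.Injective E)
    (hT : Function.Surjective T) (hTE : T ∘ₗ E = 0)
    (hdim : finrank K U + finrank K W = finrank K V) :
    range E = ker T := by
  refine Submodule.eq_of_le_of_finrank_le (range_le_ker_iff.2 hTE) ?_
  have := T.finrank_range_add_finrank_ker
  rw [range_eq_top.2 hT, finrank_top] at this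
  rw [finrank_range_of_inj hE]
  omega

section AffineFunctionals

variable {K V ι : Type*} [Field K] [AddCommGroup V] [Module K V]

theorem AffineMap.finrank_eq_finrank_add_one [FiniteDimensional K V] :
    finrank K (V →ᵃ[K] K) = finrank K V + 1 := by
  rw [(AffineMap.toConstProdLinearMap K).finrank_eq, finrank_prod, finrank_self,
    Subspace.dual_finrank_eq, add_comm]

theorem AffineMap.sum_smul_apply_eq_zero [Fintype ι] {W : Type*} [AddCommGroup W] [Module K W]
    (φ : V →ᵃ[K] W) {c : ι → K} {a : ι → V} (hc₀ : ∑ i, c i = 0) (hc : ∑ i, c i • a i = 0) :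
    ∑ i, c i • φ (a i) = 0 := by
  have hφ : ∀ x, φ x = φ.linear x + φ 0 := fun x ↦ by
    simpa [sub_eq_iff_eq_add] using (φ.linearMap_vsub x 0).symm
  calc ∑ i, c i • φ (a i) = φ.linear (∑ i, c i • a i) + (∑ i, c i) • φ 0 := by
        simp only [hφ (a _), smul_add, Finset.sum_add_distrib, map_sum, map_smul, Finset.sum_smul]
    _ = 0 := by rw [hc, hc₀, map_zero, zero_smul, add_zero]

variable (K) in
def affineEval (a : ι → V) : (V →ᵃ[K] K) →ₗ[K] (ι → K) where
  toFun φ i := φ (a i)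
  map_add' _ _ := rfl
  map_smul' _ _ := rfl

@[simp]
theorem affineEval_apply (a : ι → V) (φ : V →ᵃ[K] K) (i : ι) : affineEval K a φ i = φ (a i) :=
  rfl

theorem affineEval_injective {a : ι → V} (ha : affineSpan K (Set.range a) = ⊤) :
    Function.Injective (affineEval K a) :=
  fun _ _ h ↦ AffineMap.ext_on ha (by rintro _ ⟨i, rfl⟩; exact congrFun h i)

end AffineFunctionals

theorem exists_weights_of_mem_convexHull_image {R E ι : Type*} [Field R] [LinearOrder R]
    [IsStrictOrderedRing R] [AddCommGroup E] [Module R E] [Fintype ι] (a : ι → E) (s : Set ι)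
    {x : E} (hx : x ∈ convexHull R (a '' s)) :
    ∃ μ : ι → R, (∀ i, 0 ≤ μ i) ∧ (∀ i ∉ s, μ i = 0) ∧ ∑ i, μ i = 1 ∧ ∑ i, μ i • a i = x := by
  classical
  have himage : a '' s = Fintype.linearCombination R a '' ((fun i ↦ Pi.single i 1) '' s) := by
    rw [Set.image_image]
    simp [Fintype.linearCombination_apply_single]
  rw [himage, ← LinearMap.image_convexHull] at hx
  obtain ⟨μ, hμ, rfl⟩ := hx
  have hsimplex : μ ∈ stdSimplex R ι := convexHull_rangle_single_eq_stdSimplex R ι ▸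
    convexHull_mono (Set.image_subset_range _ _) hμ
  have hsupp : μ ∈ {ν : ι → R | ∀ i ∉ s, ν i = 0} := by
    refine convexHull_min ?_ ?_ hμ
    · rintro _ ⟨j, hj, rfl⟩ i hi
      simp [ne_of_mem_of_not_mem hj hi |>.symm]
    · intro ν hν ν' hν' p q _ _ _ i hi
      simp [hν i hi, hν' i hi]
  exact ⟨μ, hsimplex.1, hsupp, hsimplex.2, by simp [Fintype.linearCombination_apply]⟩

theorem not_pos2Span_of_forall_ne_nonneg {ι V : Type*} [AddCommGroup V] [Module ℚ V]
    {w : ι → V} {f : V →ₗ[ℚ] ℚ} {j : ι} (hnonneg : ∀ i, i ≠ j → 0 ≤ f (w i))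
    (hne : ∃ i, i ≠ j ∧ f (w i) ≠ 0) : ¬ Pos2Span w := by
  intro h
  obtain ⟨i₀, -, hi₀⟩ := hne
  obtain ⟨i, i', hii', hi, hi'⟩ := (h f fun hf ↦ hi₀ (by simp [hf])).2
  have heq_j : ∀ k, f (w k) < 0 → k = j := fun k hk ↦ by
    by_contra hkj
    exact (hnonneg k hkj).not_gt hk
  exact hii' ((heq_j i hi).trans (heq_j i' hi').symm)

theorem IsGale.exists_linearMap_apply_eq {n d m : ℕ} {a : Fin n → Fin d → ℚ}
    {g : Fin n → Fin m → ℚ} (hGale : IsGale a g) (hspan : Submodule.span ℚ (Set.range g) = ⊤)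
    (haff : affineSpan ℚ (Set.range a) = ⊤) {c : Fin n → ℚ} (hc₀ : ∑ i, c i = 0)
    (hc : ∑ i, c i • a i = 0) :
    ∃ f : (Fin m → ℚ) →ₗ[ℚ] ℚ, ∀ i, f (g i) = c i := by
  obtain ⟨hdim, -, hsum, horth⟩ := hGale
  set T := Fintype.linearCombination ℚ g
  have hT : Function.Surjective T := by
    rw [← LinearMap.range_eq_top, Fintype.range_linearCombination, hspan]
  have hrow : ∀ k, ∑ i, g i k • a i = 0 := fun k ↦ by
    ext j
    simpa [mul_comm] using horth k j
  have hker : LinearMap.range (affineEval ℚ a) = LinearMap.ker T := by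
    refine LinearMap.range_eq_ker_of_finrank_add_eq (affineEval_injective haff) hT ?_ ?_
    · ext φ k
      simpa [T, Fintype.linearCombination_apply, mul_comm] using
        φ.sum_smul_apply_eq_zero (hsum k) (hrow k)
    · rw [AffineMap.finrank_eq_finrank_add_one, Module.finrank_fin_fun, Module.finrank_fin_fun,
        Module.finrank_fin_fun]
      omega
  obtain ⟨f, hf⟩ := LinearMap.exists_comp_eq_of_ker_le hT
    (ψ := Fintype.linearCombination ℚ c) <| hker ▸ LinearMap.range_le_ker_iff.2 <| by
      ext φ
      simpa [Fintype.linearCombination_apply, mul_comm] using φ.sum_smul_apply_eq_zero hc₀ hc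
  refine ⟨f, fun i ↦ ?_⟩
  simpa [T, Fintype.linearCombination_apply_single] using LinearMap.congr_fun hf (Pi.single i 1)

/-- If in the Gale dual point configuration of a spanning vector configuration `w`
some point `a j` lies in the convex hull of the others, then there is an index `j` and
a linear functional nonnegative on `{w i : i ≠ j}` and not identically zero there; in
particular `w` is not positively 2-spanning. -/
theorem stmt18 {n d m : ℕ} (w : Fin n → Fin d → ℚ) (a : Fin n → Fin m → ℚ)
    (hGale : IsGale a w) (hspan : Submodule.span ℚ (Set.range w) = ⊤)
    (haff : affineSpan ℚ (Set.range a) = ⊤)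
    (hja : ∃ j, a j ∈ convexHull ℚ (a '' {i | i ≠ j})) :
    (∃ j, ∃ f : (Fin d → ℚ) →ₗ[ℚ] ℚ,
      (∀ i, i ≠ j → 0 ≤ f (w i)) ∧ ∃ i, i ≠ j ∧ f (w i) ≠ 0) ∧
    ¬ Pos2Span w := by
  obtain ⟨j, hj⟩ := hja
  obtain ⟨μ, hμ₀, hμj, hμ₁, hμa⟩ := exists_weights_of_mem_convexHull_image a _ hj
  obtain ⟨f, hf⟩ := hGale.exists_linearMap_apply_eq hspan haff (c := μ - Pi.single j 1)
    (by simp [Finset.sum_sub_distrib, hμ₁]) (by simp [sub_smul, Finset.sum_sub_distrib, hμa])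
  have hnonneg : ∀ i, i ≠ j → 0 ≤ f (w i) := fun i hi ↦ by simp [hf, hi, hμ₀]
  have hsupp : ∃ i, i ≠ j ∧ f (w i) ≠ 0 := by
    obtain ⟨i, -, hi⟩ := Finset.exists_ne_zero_of_sum_ne_zero (hμ₁.symm ▸ one_ne_zero)
    have hij : i ≠ j := fun h ↦ hi (hμj i (by simpa using h))
    exact ⟨i, hij, by simpa [hf, hij] using hi⟩
  exact ⟨⟨j, f, hnonneg, hsupp⟩, not_pos2Span_of_forall_ne_nonneg hnonneg hsupp⟩
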